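/- arXiv:2401.17237 — 3 statements merged into one kernel-verified Lean document; each statement's English description precedes it below -/
import Mathlib

section
/- Let V be a real vector space, a : V × V → ℝ a bilinear form, and f, J : V → ℝ linear functionals. Let V_h ⊆ V_h2 ⊆ V be linear subspaces, and let u_h ∈ V_h, u_h2 ∈ V_h2, z_h ∈ V_h, z_h2 ∈ V_h2 be the discrete and enriched primal and adjoint Galerkin solutions. Then the primal residual evaluated at the enriched adjoint error equals the adjoint residual evaluated at the enriched primal error: f(z_h2 − z_h) − a(u_h, z_h2 − z_h) = J(u_h2 − u_h) − a(u_h2 − u_h, z_h). -/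
/-- **Galerkin orthogonality for the DWR estimator (touching domains paper):**
For a bilinear form `a`, linear functionals `f` (right-hand side) and `J` (goal functional),
nested subspaces `V_h ⊆ V_h2 ⊆ V`, and discrete/enriched primal and adjoint Galerkin
solutions, the primal residual evaluated at the enriched adjoint error equals the adjoint
residual evaluated at the enriched primal error:
`f(z_h2 − z_h) − a(u_h, z_h2 − z_h) = J(u_h2 − u_h) − a(u_h2 − u_h, z_h)`. -/
theorem primal_residual_eq_adjoint_residual
    {V : Type*} [AddCommGroup V] [Module ℝ V]
    (a : V →ₗ[ℝ] V →ₗ[ℝ] ℝ) (f J : V →ₗ[ℝ] ℝ)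
    (Vh Vh2 : Submodule ℝ V) (hVV : Vh ≤ Vh2)
    (uh uh2 zh zh2 : V)
    (huh : uh ∈ Vh) (huh2 : uh2 ∈ Vh2) (hzh : zh ∈ Vh) (hzh2 : zh2 ∈ Vh2)
    (huh_sol : ∀ v ∈ Vh, a uh v = f v)
    (huh2_sol : ∀ v ∈ Vh2, a uh2 v = f v)
    (hzh_sol : ∀ v ∈ Vh, a v zh = J v)
    (hzh2_sol : ∀ v ∈ Vh2, a v zh2 = J v) :
    f (zh2 - zh) - a uh (zh2 - zh) = J (uh2 - uh) - a (uh2 - uh) zh := by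
  have h1 : f zh2 = J uh2 := by rw [← huh2_sol zh2 hzh2, hzh2_sol uh2 huh2]
  have h2 : a uh zh2 = J uh := hzh2_sol uh (hVV huh)
  have h3 : a uh zh = f zh := huh_sol zh hzh
  have h4 : a uh2 zh = f zh := huh2_sol zh (hVV hzh)
  simp only [map_sub, LinearMap.sub_apply, h1, h2, h3, h4]
  ring
end

section
/- Let V be a real vector space, a : V × V → ℝ a bilinear form, and f, J : V → ℝ linear functionals. Let V_h ⊆ V_h2 ⊆ V be linear subspaces, and let u_h ∈ V_h, u_h2 ∈ V_h2, z_h ∈ V_h, z_h2 ∈ V_h2 be the discrete and enriched primal and adjoint Galerkin solutions. Then the dual-weighted-residual error estimator η_h := (1/2)·(f(z_h2 − z_h) − a(u_h, z_h2 − z_h)) + (1/2)·(J(u_h2 − u_h) − a(u_h2 − u_h, z_h)) + (f(z_h) − a(u_h, z_h)) is exact with respect to the enriched solution, i.e. η_h = J(u_h2) − J(u_h). -/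
/-- **Exactness of the DWR error estimator with respect to the enriched solution:**
For a bilinear form `a`, linear functionals `f` and `J`, nested subspaces
`V_h ⊆ V_h2 ⊆ V` and discrete/enriched primal and adjoint Galerkin solutions,
the dual-weighted-residual estimator
`η_h = ½(f(z_h2−z_h) − a(u_h, z_h2−z_h)) + ½(J(u_h2−u_h) − a(u_h2−u_h, z_h)) + (f(z_h) − a(u_h, z_h))`
satisfies `η_h = J(u_h2) − J(u_h)`. -/
theorem dwr_estimator_exact_for_enriched
    {V : Type*} [AddCommGroup V] [Module ℝ V]
    (a : V →ₗ[ℝ] V →ₗ[ℝ] ℝ) (f J : V →ₗ[ℝ] ℝ)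
    (Vh Vh2 : Submodule ℝ V) (hVV : Vh ≤ Vh2)
    (uh uh2 zh zh2 : V)
    (huh : uh ∈ Vh) (huh2 : uh2 ∈ Vh2) (hzh : zh ∈ Vh) (hzh2 : zh2 ∈ Vh2)
    (huh_sol : ∀ v ∈ Vh, a uh v = f v)
    (huh2_sol : ∀ v ∈ Vh2, a uh2 v = f v)
    (hzh_sol : ∀ v ∈ Vh, a v zh = J v)
    (hzh2_sol : ∀ v ∈ Vh2, a v zh2 = J v) :
    (1 / 2) * (f (zh2 - zh) - a uh (zh2 - zh))
      + (1 / 2) * (J (uh2 - uh) - a (uh2 - uh) zh)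
      + (f zh - a uh zh)
    = J uh2 - J uh := by
  have h1 : a uh zh = f zh := huh_sol zh hzh
  have h2 : a uh zh = J uh := hzh_sol uh huh
  have h3 : a uh2 zh = f zh := huh2_sol zh (hVV hzh)
  have h4 : a uh zh2 = J uh := hzh2_sol uh (hVV huh)
  have h5 : a uh2 zh2 = f zh2 := huh2_sol zh2 hzh2
  have h6 : a uh2 zh2 = J uh2 := hzh2_sol uh2 huh2
  simp only [map_sub, LinearMap.sub_apply]
  linarith
end

section
/- The 4-periodized heat kernel Θ(t, x) := Σ_{k ∈ ℤ} (4πt)^{−1/2} · exp(−(x − 4k)²/(4t)) satisfies the one-dimensional heat equation: for every t > 0 and x ∈ ℝ, the partial derivative of Θ with respect to t at (t, x) equals the second partial derivative of Θ with respect to x at (t, x). -/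
/-!
`Θ(t, ·)` is the sum of the translates by `4ℤ` of the Gaussian heat kernel
`G(t, w) = (4πt)^{-1/2} e^{-w²/(4t)}`, which solves the heat equation:
`∂ₜG = ∂ₓ²G = (w²/(4t²) - 1/(2t)) G`. Near any point `(t, x)` with `t > 0`, each of `G`, `∂ₓG`,
`∂ₓ²G = ∂ₜG` evaluated at `x - 4k` is a polynomial times a Gaussian in `x - 4k`, hence bounded by
`C e^{-c k²}` uniformly in `k ∈ ℤ`; so the series may be differentiated term by term.
-/

open Real

/-- The 4-periodized heat kernel, arising from the method of images for the heat
equation on an interval of length 2 with homogeneous Neumann boundary conditions: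
`Θ(t, x) = Σ_{k ∈ ℤ} (4πt)^{−1/2} · exp(−(x − 4k)²/(4t))`. -/
noncomputable def periodizedHeatKernel (t x : ℝ) : ℝ :=
  ∑' k : ℤ, (4 * π * t) ^ (-(1:ℝ)/2) * Real.exp (-(x - 4 * k) ^ 2 / (4 * t))

open Set

lemma summable_exp_neg_mul_sq_int {c : ℝ} (hc : 0 < c) :
    Summable fun k : ℤ => exp (-c * k ^ 2) := by
  refine (summable_pow_mul_jacobiTheta₂_term_bound 0 (T := c / π) (by positivity) 0).congr
    fun k => ?_
  rw [pow_zero, one_mul]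
  congr 1
  field_simp
  ring

lemma exp_neg_mul_sq_sub_le {b : ℝ} (hb : 0 ≤ b) (z v : ℝ) :
    exp (-b * (z - v) ^ 2) ≤ exp (b * z ^ 2) * exp (-(b / 2) * v ^ 2) := by
  rw [← exp_add, exp_le_exp]
  nlinarith [mul_nonneg hb (sq_nonneg (2 * z - v))]

lemma one_add_sq_mul_exp_neg_mul_sq_le {b : ℝ} (hb : 0 < b) (w : ℝ) :
    (1 + w ^ 2) * exp (-b * w ^ 2) ≤ (1 + 2 / b) * exp (-(b / 2) * w ^ 2) := by
  have hsq : w ^ 2 ≤ 2 / b * exp (b / 2 * w ^ 2) := by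
    rw [div_mul_eq_mul_div, le_div_iff₀ hb]
    nlinarith [add_one_le_exp (b / 2 * w ^ 2), sq_nonneg w]
  calc (1 + w ^ 2) * exp (-b * w ^ 2) = exp (-b * w ^ 2) + w ^ 2 * exp (-b * w ^ 2) := by ring
    _ ≤ exp (-(b / 2) * w ^ 2) + 2 / b * exp (b / 2 * w ^ 2) * exp (-b * w ^ 2) := by
        gcongr exp ?_ + ?_ * _
        nlinarith [sq_nonneg w]
    _ = (1 + 2 / b) * exp (-(b / 2) * w ^ 2) := by
        rw [mul_assoc, ← exp_add]; ring_nf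

def HasGaussianDecay (f : ℝ → ℝ) : Prop :=
  ∃ A b : ℝ, 0 < b ∧ ∀ w, |f w| ≤ A * exp (-b * w ^ 2)

lemma abs_comp_sub_int_mul_le {f : ℝ → ℝ} {A b : ℝ} (hb : 0 ≤ b)
    (hf : ∀ w, |f w| ≤ A * exp (-b * w ^ 2)) (L : ℝ) {z R : ℝ} (hz : |z| ≤ R) (k : ℤ) :
    |f (z - L * k)| ≤ A * exp (b * R ^ 2) * exp (-(b * L ^ 2 / 2) * k ^ 2) := by
  have hA : 0 ≤ A := nonneg_of_mul_nonneg_left ((abs_nonneg _).trans (hf 0)) (exp_pos _)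
  have hzR : z ^ 2 ≤ R ^ 2 := sq_le_sq' (abs_le.1 hz).1 (abs_le.1 hz).2
  calc |f (z - L * k)| ≤ A * exp (-b * (z - L * k) ^ 2) := hf _
    _ ≤ A * (exp (b * R ^ 2) * exp (-(b / 2) * (L * k) ^ 2)) := by
        gcongr
        exact (exp_neg_mul_sq_sub_le hb z _).trans (by gcongr)
    _ = A * exp (b * R ^ 2) * exp (-(b * L ^ 2 / 2) * k ^ 2) := by ring_nf

namespace HasGaussianDecay

variable {f f' : ℝ → ℝ} {L : ℝ}

lemma summable_comp_sub_int_mul (hf : HasGaussianDecay f) (hL : L ≠ 0) (y : ℝ) :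
    Summable fun k : ℤ => f (y - L * k) := by
  obtain ⟨A, b, hb, hfb⟩ := hf
  exact .of_norm_bounded
    ((summable_exp_neg_mul_sq_int (div_pos (mul_pos hb (sq_pos_of_ne_zero hL)) two_pos)).mul_left _)
    (abs_comp_sub_int_mul_le hb.le hfb L le_rfl)

lemma hasDerivAt_tsum_comp_sub_int_mul (hf : HasGaussianDecay f) (hf' : HasGaussianDecay f')
    (hderiv : ∀ w, HasDerivAt f (f' w) w) (hL : L ≠ 0) (y : ℝ) :
    HasDerivAt (fun z => ∑' k : ℤ, f (z - L * k)) (∑' k : ℤ, f' (y - L * k)) y := by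
  obtain ⟨A, b, hb, hfb⟩ := hf'
  have hy : y ∈ Metric.ball y 1 := Metric.mem_ball_self one_pos
  refine hasDerivAt_tsum_of_isPreconnected
    ((summable_exp_neg_mul_sq_int (div_pos (mul_pos hb (sq_pos_of_ne_zero hL)) two_pos)).mul_left
      (A * exp (b * (|y| + 1) ^ 2)))
    Metric.isOpen_ball (convex_ball y 1).isPreconnected
    (fun k z _ => (hderiv _).comp_sub_const z _) (fun k z hz => ?_) hy
    (hf.summable_comp_sub_int_mul hL y) hy
  refine abs_comp_sub_int_mul_le hb.le hfb L ?_ k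
  rw [Metric.mem_ball, Real.dist_eq] at hz
  linarith [abs_sub_abs_le_abs_sub z y]

end HasGaussianDecay

noncomputable def gaussianHeatKernel (t x : ℝ) : ℝ :=
  (4 * π * t) ^ (-(1:ℝ)/2) * exp (-x ^ 2 / (4 * t))

section GaussianHeatKernel

variable {t : ℝ}

lemma gaussianHeatKernel_nonneg (ht : 0 ≤ t) (x : ℝ) : 0 ≤ gaussianHeatKernel t x := by
  unfold gaussianHeatKernel; positivity

lemma hasDerivAt_gaussianHeatKernel_space (t x : ℝ) :
    HasDerivAt (gaussianHeatKernel t) (-x / (2 * t) * gaussianHeatKernel t x) x := by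
  have hexp : HasDerivAt (fun y => -y ^ 2 / (4 * t)) (-(2 * x) / (4 * t)) x := by
    simpa using ((hasDerivAt_pow 2 x).neg.div_const (4 * t))
  refine (hexp.exp.const_mul _).congr_deriv ?_
  unfold gaussianHeatKernel
  ring

lemma hasDerivAt_neg_div_mul_gaussianHeatKernel (t x : ℝ) :
    HasDerivAt (fun y => -y / (2 * t) * gaussianHeatKernel t y)
      ((x ^ 2 / (4 * t ^ 2) - 1 / (2 * t)) * gaussianHeatKernel t x) x := by
  refine ((hasDerivAt_neg x).div_const (2 * t) |>.mul
    (hasDerivAt_gaussianHeatKernel_space t x)).congr_deriv ?_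
  ring

lemma hasDerivAt_gaussianHeatKernel_time (ht : 0 < t) (x : ℝ) :
    HasDerivAt (fun τ => gaussianHeatKernel τ x)
      ((x ^ 2 / (4 * t ^ 2) - 1 / (2 * t)) * gaussianHeatKernel t x) t := by
  have hcoef := ((hasDerivAt_id' t).const_mul (4 * π)).rpow_const (p := -(1:ℝ)/2)
    (Or.inl (by positivity))
  have hexp := ((hasDerivAt_const t (-x ^ 2)).fun_div ((hasDerivAt_id' t).const_mul 4)
    (by positivity)).exp
  refine (hcoef.mul hexp).congr_deriv ?_
  have hpow : (4 * π * t) ^ (-(1:ℝ)/2 - 1) = (4 * π * t) ^ (-(1:ℝ)/2) / (4 * π * t) := by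
    rw [rpow_sub (by positivity), rpow_one]
  rw [hpow]
  unfold gaussianHeatKernel
  field_simp
  ring

lemma abs_mul_gaussianHeatKernel_le {τ K p w : ℝ} (ht : 0 < t) (hτ : τ ∈ Icc (t / 2) (2 * t))
    (hp : |p| ≤ K * (1 + w ^ 2)) :
    |p * gaussianHeatKernel τ w|
      ≤ K * (2 * π * t) ^ (-(1:ℝ)/2) * (1 + 16 * t) * exp (-(1 / (16 * t)) * w ^ 2) := by
  have hτ0 : 0 < τ := by linarith [hτ.1]
  have hK : 0 ≤ K := nonneg_of_mul_nonneg_left ((abs_nonneg p).trans hp) (by positivity)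
  have hcoef : (4 * π * τ) ^ (-(1:ℝ)/2) ≤ (2 * π * t) ^ (-(1:ℝ)/2) :=
    rpow_le_rpow_of_nonpos (by positivity) (by nlinarith [pi_pos, hτ.1]) (by norm_num)
  have hexp : exp (-w ^ 2 / (4 * τ)) ≤ exp (-(1 / (8 * t)) * w ^ 2) := by
    rw [exp_le_exp, neg_div, neg_mul, one_div_mul_eq_div, neg_le_neg_iff]
    exact div_le_div_of_nonneg_left (sq_nonneg w) (by positivity) (by linarith [hτ.2])
  calc |p * gaussianHeatKernel τ w|
      = |p| * ((4 * π * τ) ^ (-(1:ℝ)/2) * exp (-w ^ 2 / (4 * τ))) := by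
        rw [abs_mul, abs_of_nonneg (gaussianHeatKernel_nonneg hτ0.le w), gaussianHeatKernel]
    _ ≤ K * (1 + w ^ 2) * ((2 * π * t) ^ (-(1:ℝ)/2) * exp (-(1 / (8 * t)) * w ^ 2)) := by
        gcongr
    _ = K * (2 * π * t) ^ (-(1:ℝ)/2) * ((1 + w ^ 2) * exp (-(1 / (8 * t)) * w ^ 2)) := by ring
    _ ≤ K * (2 * π * t) ^ (-(1:ℝ)/2)
          * ((1 + 2 / (1 / (8 * t))) * exp (-(1 / (8 * t) / 2) * w ^ 2)) := by
        gcongr K * _ * ?_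
        exact one_add_sq_mul_exp_neg_mul_sq_le (by positivity) w
    _ = K * (2 * π * t) ^ (-(1:ℝ)/2) * (1 + 16 * t) * exp (-(1 / (16 * t)) * w ^ 2) := by
        rw [div_div_eq_mul_div, div_one, show 1 / (8 * t) / 2 = 1 / (16 * t) by ring]
        ring

lemma abs_sq_div_sub_inv_le {τ : ℝ} (ht : 0 < t) (hτ : τ ∈ Icc (t / 2) (2 * t)) (w : ℝ) :
    |w ^ 2 / (4 * τ ^ 2) - 1 / (2 * τ)| ≤ (1 / t ^ 2 + 1 / t) * (1 + w ^ 2) := by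
  have hτ0 : 0 < τ := by linarith [hτ.1]
  have hsq : w ^ 2 / (4 * τ ^ 2) ≤ w ^ 2 / t ^ 2 :=
    div_le_div_of_nonneg_left (sq_nonneg w) (by positivity) (by nlinarith [hτ.1])
  have hinv : 1 / (2 * τ) ≤ 1 / t := one_div_le_one_div_of_le ht (by linarith [hτ.1])
  calc |w ^ 2 / (4 * τ ^ 2) - 1 / (2 * τ)| ≤ w ^ 2 / (4 * τ ^ 2) + 1 / (2 * τ) :=
        (abs_sub _ _).trans_eq <| by
          rw [abs_of_nonneg (by positivity), abs_of_nonneg (by positivity)]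
    _ ≤ w ^ 2 / t ^ 2 + 1 / t := add_le_add hsq hinv
    _ ≤ w ^ 2 / t ^ 2 + 1 / t + (1 / t ^ 2 + w ^ 2 / t) := le_add_of_nonneg_right (by positivity)
    _ = (1 / t ^ 2 + 1 / t) * (1 + w ^ 2) := by ring

lemma hasGaussianDecay_mul_gaussianHeatKernel {p : ℝ → ℝ} {K : ℝ} (ht : 0 < t)
    (hp : ∀ w, |p w| ≤ K * (1 + w ^ 2)) :
    HasGaussianDecay fun w => p w * gaussianHeatKernel t w :=
  ⟨_, _, by positivity, fun w =>
    abs_mul_gaussianHeatKernel_le ht ⟨by linarith, by linarith⟩ (hp w)⟩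

lemma hasGaussianDecay_gaussianHeatKernel (ht : 0 < t) :
    HasGaussianDecay (gaussianHeatKernel t) := by
  simpa using hasGaussianDecay_mul_gaussianHeatKernel (p := fun _ => 1) (K := 1) ht
    fun w => by simp [sq_nonneg]

lemma hasGaussianDecay_neg_div_mul_gaussianHeatKernel (ht : 0 < t) :
    HasGaussianDecay fun w => -w / (2 * t) * gaussianHeatKernel t w := by
  refine hasGaussianDecay_mul_gaussianHeatKernel (K := 1 / (2 * t)) ht fun w => ?_
  rw [abs_div, abs_neg, abs_of_pos (by positivity : 0 < 2 * t), ← one_div_mul_eq_div]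
  gcongr
  nlinarith [sq_abs w, sq_nonneg (|w| - 1)]

lemma hasGaussianDecay_sq_div_sub_inv_mul_gaussianHeatKernel (ht : 0 < t) :
    HasGaussianDecay fun w => (w ^ 2 / (4 * t ^ 2) - 1 / (2 * t)) * gaussianHeatKernel t w :=
  hasGaussianDecay_mul_gaussianHeatKernel ht
    (abs_sq_div_sub_inv_le ht ⟨by linarith, by linarith⟩)

end GaussianHeatKernel

lemma hasDerivAt_periodizedHeatKernel_time {t : ℝ} (ht : 0 < t) (x : ℝ) :
    HasDerivAt (fun τ => periodizedHeatKernel τ x)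
      (∑' k : ℤ, ((x - 4 * k) ^ 2 / (4 * t ^ 2) - 1 / (2 * t)) * gaussianHeatKernel t (x - 4 * k))
      t := by
  have ht_mem : t ∈ Ioo (t / 2) (2 * t) := ⟨by linarith, by linarith⟩
  exact hasDerivAt_tsum_of_isPreconnected
    ((summable_exp_neg_mul_sq_int (by positivity)).mul_left _) isOpen_Ioo isPreconnected_Ioo
    (fun k τ hτ => hasDerivAt_gaussianHeatKernel_time (by linarith [hτ.1]) _)
    (fun k τ hτ => abs_comp_sub_int_mul_le (by positivity)
      (fun w => abs_mul_gaussianHeatKernel_le ht (Ioo_subset_Icc_self hτ)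
        (abs_sq_div_sub_inv_le ht (Ioo_subset_Icc_self hτ) w)) 4 le_rfl k)
    ht_mem ((hasGaussianDecay_gaussianHeatKernel ht).summable_comp_sub_int_mul four_ne_zero x)
    ht_mem

/-- **The periodized heat kernel solves the heat equation:** for every `t > 0` and every
`x ∈ ℝ`, the partial derivative of `Θ` with respect to `t` at `(t, x)` equals the second
partial derivative of `Θ` with respect to `x` at `(t, x)`, i.e. `∂ₜΘ = ∂ₓₓΘ`. -/
theorem periodizedHeatKernel_heat_equation {t : ℝ} (ht : 0 < t) (x : ℝ) :
    deriv (fun τ => periodizedHeatKernel τ x) t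
      = deriv (deriv (fun y => periodizedHeatKernel t y)) x := by
  have hG := hasGaussianDecay_gaussianHeatKernel ht
  have hG' := hasGaussianDecay_neg_div_mul_gaussianHeatKernel ht
  have hG'' := hasGaussianDecay_sq_div_sub_inv_mul_gaussianHeatKernel ht
  have hΘx : deriv (periodizedHeatKernel t)
      = fun y => ∑' k : ℤ, -(y - 4 * k) / (2 * t) * gaussianHeatKernel t (y - 4 * k) :=
    funext fun y => (hG.hasDerivAt_tsum_comp_sub_int_mul hG'
      (hasDerivAt_gaussianHeatKernel_space t) four_ne_zero y).deriv
  rw [(hasDerivAt_periodizedHeatKernel_time ht x).deriv, hΘx,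
    (hG'.hasDerivAt_tsum_comp_sub_int_mul hG'' (hasDerivAt_neg_div_mul_gaussianHeatKernel t)
      four_ne_zero x).deriv]
end
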